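/- Let μ ∈ ℂ and let x ∈ ℂ with x not lying in the real segment [−2, 2] and x² ≠ μ. Set λ = (x/2)(1 + √(1 − 4/x²)), where √ is the principal complex square root, and let A, B ∈ ℂ satisfy AB = (x² − μ)/(x² − 4). For n ∈ ℤ set yₙ = Aλⁿ + Bλ⁻ⁿ, and assume yₙ ≠ 0 for all n ∈ ℤ. Then the family (μ/(x·yₙ·y_{n+1}))_{n ∈ ℤ} is summable and ∑_{n ∈ ℤ} μ/(x·yₙ·y_{n+1}) = (μ/(x² − μ))·√(1 − 4/x²). -/

import Mathlib

/-!
With `s = √(1 - 4/x²)` one has `λ⁻¹ = (x/2)(1 - s)`, and `Re s > 0` because `1 - 4/x²` lies off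
the closed negative real axis when `x ∉ [-2, 2]`; hence `q = λ⁻² = (1 - s)/(1 + s)` has `‖q‖ < 1`.
Writing `yₙ = Aλⁿ (1 + c qⁿ)` with `c = B/A`, the summand is `μ/(AB x² s)` times `uₙ₊₁ - uₙ`
for `uₙ = (1 + c qⁿ)⁻¹ = Aλⁿ/yₙ`. These differences decay geometrically in both directions,
`uₙ → 1` as `n → ∞` and `uₙ → 0` as `n → -∞`, so they sum to `1`; finally `AB x² s² = x² - μ`.
-/

open Filter Topology Asymptotics Complex

/-- The principal complex square root: the branch with nonnegative real part. -/
noncomputable def csqrt (w : ℂ) : ℂ := w ^ ((1 : ℂ) / 2)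

theorem Summable.hasSum_sub_of_tendsto {E : Type*} [TopologicalSpace E] [AddCommGroup E]
    [IsTopologicalAddGroup E] [T2Space E] {v : ℕ → E} {L : E}
    (hs : Summable fun n => v (n + 1) - v n) (hv : Tendsto v atTop (𝓝 L)) :
    HasSum (fun n => v (n + 1) - v n) (L - v 0) := by
  rw [hs.hasSum_iff_tendsto_nat]
  simpa only [Finset.sum_range_sub] using hv.sub_const (v 0)

section Telescoping

variable {𝕜 : Type*} [NormedField 𝕜] {q c : 𝕜}

theorem tendsto_inv_one_add_mul_pow (hq : ‖q‖ < 1) :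
    Tendsto (fun n : ℕ => (1 + c * q ^ n)⁻¹) atTop (𝓝 1) := by
  have h := ((tendsto_pow_atTop_nhds_zero_of_norm_lt_one hq).const_mul c).const_add 1
  simpa using h.inv₀ (by simp)

theorem hasSum_inv_one_add_mul_pow_sub [CompleteSpace 𝕜] (hq : ‖q‖ < 1)
    (hc : ∀ n : ℕ, 1 + c * q ^ n ≠ 0) :
    HasSum (fun n : ℕ => (1 + c * q ^ (n + 1))⁻¹ - (1 + c * q ^ n)⁻¹) (1 - (1 + c)⁻¹) := by
  have hv := tendsto_inv_one_add_mul_pow (c := c) hq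
  have hterm (n : ℕ) : (1 + c * q ^ (n + 1))⁻¹ - (1 + c * q ^ n)⁻¹
      = q ^ n * (c * (1 - q) * ((1 + c * q ^ n)⁻¹ * (1 + c * q ^ (n + 1))⁻¹)) := by
    field_simp [hc n, hc (n + 1)]
    ring
  have hbounded : (fun n : ℕ => c * (1 - q) * ((1 + c * q ^ n)⁻¹ * (1 + c * q ^ (n + 1))⁻¹))
      =O[atTop] fun _ => (1 : 𝕜) :=
    (tendsto_const_nhds.mul (hv.mul (hv.comp (tendsto_add_atTop_nat 1)))).isBigO_one 𝕜
  have hgeom : (fun n : ℕ => (1 + c * q ^ (n + 1))⁻¹ - (1 + c * q ^ n)⁻¹) =O[atTop]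
      fun n => ‖q‖ ^ n := by
    simp_rw [hterm, ← norm_pow]
    simpa using ((isBigO_refl (fun n : ℕ => q ^ n) atTop).mul hbounded).norm_right
  simpa using Summable.hasSum_sub_of_tendsto
    (summable_of_isBigO_nat (summable_geometric_of_lt_one (norm_nonneg q) hq) hgeom) hv

theorem one_add_inv_mul_zpow (hc0 : c ≠ 0) (hq0 : q ≠ 0) (m : ℤ) :
    1 + c⁻¹ * q ^ m = c⁻¹ * q ^ m * (1 + c * q ^ (-m)) := by
  rw [zpow_neg]
  field_simp
  ring

theorem hasSum_int_inv_one_add_mul_zpow_sub [CompleteSpace 𝕜] (hq : ‖q‖ < 1) (hq0 : q ≠ 0)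
    (hc0 : c ≠ 0) (hc : ∀ n : ℤ, 1 + c * q ^ n ≠ 0) :
    HasSum (fun n : ℤ => (1 + c * q ^ (n + 1))⁻¹ - (1 + c * q ^ n)⁻¹) 1 := by
  have hc' (m : ℤ) : 1 + c⁻¹ * q ^ m ≠ 0 := by
    rw [one_add_inv_mul_zpow hc0 hq0]
    exact mul_ne_zero (mul_ne_zero (inv_ne_zero hc0) (zpow_ne_zero m hq0)) (hc (-m))
  -- for `n → -∞` the sequence is `1 - (1 + c⁻¹ q^|n|)⁻¹`, a case of the one-sided lemma
  have hflip (m : ℤ) : (1 + c * q ^ (-m))⁻¹ = 1 - (1 + c⁻¹ * q ^ m)⁻¹ := by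
    have h1 := hc (-m)
    have h2 := hc' m
    have h3 := zpow_ne_zero m hq0
    have h4 : q ^ m + c ≠ 0 := fun h => h2 (by field_simp; linear_combination h)
    rw [zpow_neg] at h1 ⊢
    field_simp
    linear_combination (mul_div_cancel₀ c h4 : _)
  have hpos := hasSum_inv_one_add_mul_pow_sub hq (c := c) fun k => by exact_mod_cast hc k
  have hneg := hasSum_inv_one_add_mul_pow_sub hq (c := c⁻¹) fun k => by exact_mod_cast hc' k
  convert HasSum.of_nat_of_neg_add_one
    (f := fun n : ℤ => (1 + c * q ^ (n + 1))⁻¹ - (1 + c * q ^ n)⁻¹)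
    (by exact_mod_cast hpos) (hneg.congr_fun ?_) using 1
  · have h1 : 1 + c ≠ 0 := by simpa using hc 0
    have h2 : c + 1 ≠ 0 := by rwa [add_comm]
    field_simp
    ring
  · intro k
    rw [show -((k : ℤ) + 1) + 1 = -(k : ℤ) by ring, hflip,
      show -((k : ℤ) + 1) = -((k + 1 : ℕ) : ℤ) by push_cast; ring, hflip]
    simp only [zpow_natCast]
    ring

end Telescoping

section TwoTermSequence

variable {K : Type*} [Field K] {A B r : K}

theorem mul_zpow_add_mul_inv_zpow (hA : A ≠ 0) (hr : r ≠ 0) (n : ℤ) :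
    A * r ^ n + B * r⁻¹ ^ n = A * r ^ n * (1 + B / A * (r⁻¹ ^ 2) ^ n) := by
  have hp : r ^ n ≠ 0 := zpow_ne_zero n hr
  have hq : (r⁻¹ ^ 2) ^ n = (r ^ n)⁻¹ ^ 2 := by
    rw [← inv_zpow, ← zpow_natCast, ← zpow_natCast, ← zpow_mul, ← zpow_mul, mul_comm]
  rw [hq, inv_zpow]
  field_simp

theorem inv_one_add_div_mul_inv_sq_zpow_sub {y : ℤ → K} (hA : A ≠ 0) (hr : r ≠ 0)
    (hy : ∀ n, y n = A * r ^ n + B * r⁻¹ ^ n) (hy0 : ∀ n, y n ≠ 0) (n : ℤ) :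
    (1 + B / A * (r⁻¹ ^ 2) ^ (n + 1))⁻¹ - (1 + B / A * (r⁻¹ ^ 2) ^ n)⁻¹
      = A * B * (r - r⁻¹) / (y n * y (n + 1)) := by
  have hinv (m : ℤ) : (1 + B / A * (r⁻¹ ^ 2) ^ m)⁻¹ = A * r ^ m / y m := by
    rw [hy, mul_zpow_add_mul_inv_zpow hA hr,
      div_mul_cancel_left₀ (mul_ne_zero hA (zpow_ne_zero m hr))]
  have hcross : A * r ^ (n + 1) * y n - y (n + 1) * (A * r ^ n) = A * B * (r - r⁻¹) := by
    have hp : r ^ n ≠ 0 := zpow_ne_zero n hr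
    rw [hy, hy, zpow_add_one₀ hr, zpow_add_one₀ (inv_ne_zero hr), inv_zpow]
    field_simp
    ring
  rw [hinv, hinv, div_sub_div _ _ (hy0 (n + 1)) (hy0 n), hcross, mul_comm (y (n + 1))]

end TwoTermSequence

section SquareRoot

theorem csqrt_sq (w : ℂ) : csqrt w ^ 2 = w := by
  rw [csqrt, one_div]
  exact cpow_ofNat_inv_pow w 2

theorem re_csqrt_pos {w : ℂ} (hw : w ∈ slitPlane) : 0 < (csqrt w).re := by
  rw [csqrt, one_div, cpow_inv_two_re, Real.sqrt_pos]
  rcases mem_slitPlane_iff.1 hw with hre | him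
  · linarith [norm_nonneg w]
  · linarith [abs_re_lt_norm.2 him, neg_abs_le w.re]

theorem ne_zero_of_notMem_image_Icc {x : ℂ}
    (hx : x ∉ (fun r : ℝ => (r : ℂ)) '' Set.Icc (-2 : ℝ) 2) : x ≠ 0 := by
  rintro rfl
  exact hx ⟨0, by norm_num, by simp⟩

theorem one_sub_four_div_sq_mem_slitPlane {x : ℂ}
    (hx : x ∉ (fun r : ℝ => (r : ℂ)) '' Set.Icc (-2 : ℝ) 2) : 1 - 4 / x ^ 2 ∈ slitPlane := by
  have hx0 := ne_zero_of_notMem_image_Icc hx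
  rw [mem_slitPlane_iff_not_le_zero]
  intro h
  obtain ⟨ht, him⟩ := nonpos_iff.1 h
  set t := (1 - 4 / x ^ 2).re
  have hw : 1 - 4 / x ^ 2 = (t : ℂ) := Complex.ext (by simp [t]) (by simp [him])
  have ht1 : 0 < 1 - t := by linarith
  have hsq : x ^ 2 = ((√(4 / (1 - t)) : ℝ) : ℂ) ^ 2 := by
    rw [← ofReal_pow, Real.sq_sqrt (by positivity)]
    have h1 : (1 : ℂ) - t ≠ 0 := by exact_mod_cast ht1.ne'
    push_cast
    rw [eq_div_iff h1, ← hw]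
    field_simp
    ring
  have hρ : √(4 / (1 - t)) ≤ 2 := by
    rw [Real.sqrt_le_left (by norm_num), div_le_iff₀ ht1]
    nlinarith
  rcases sq_eq_sq_iff_eq_or_eq_neg.1 hsq with h' | h'
  · exact hx ⟨_, ⟨by linarith [Real.sqrt_nonneg (4 / (1 - t))], hρ⟩, h'.symm⟩
  · exact hx ⟨-√(4 / (1 - t)), ⟨by linarith, by linarith [Real.sqrt_nonneg (4 / (1 - t))]⟩,
      by push_cast; exact h'.symm⟩

theorem sq_sub_four_ne_zero {x : ℂ}
    (hx : x ∉ (fun r : ℝ => (r : ℂ)) '' Set.Icc (-2 : ℝ) 2) : x ^ 2 - 4 ≠ 0 := by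
  have hx0 := ne_zero_of_notMem_image_Icc hx
  intro h
  apply slitPlane_ne_zero (one_sub_four_div_sq_mem_slitPlane hx)
  field_simp
  linear_combination h

theorem norm_one_sub_lt_norm_one_add {s : ℂ} (hs : 0 < s.re) : ‖1 - s‖ < ‖1 + s‖ := by
  rw [← sq_lt_sq₀ (norm_nonneg _) (norm_nonneg _), ← normSq_eq_norm_sq, ← normSq_eq_norm_sq,
    normSq_apply, normSq_apply]
  simp only [sub_re, add_re, sub_im, add_im, one_re, one_im]
  nlinarith

end SquareRoot

section RootOfQuadratic

variable {x s : ℂ}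

theorem half_mul_one_add_ne_zero (hx0 : x ≠ 0) (hre : 0 < s.re) : x / 2 * (1 + s) ≠ 0 := by
  refine mul_ne_zero (div_ne_zero hx0 two_ne_zero) fun h => ?_
  have := congrArg re h
  rw [add_re, one_re, zero_re] at this
  linarith

theorem inv_half_mul_one_add (hx0 : x ≠ 0) (hs : s ^ 2 = 1 - 4 / x ^ 2) :
    (x / 2 * (1 + s))⁻¹ = x / 2 * (1 - s) := by
  refine inv_eq_of_mul_eq_one_right ?_
  rw [show x / 2 * (1 + s) * (x / 2 * (1 - s)) = x ^ 2 / 4 * (1 - s ^ 2) by ring, hs]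
  field_simp
  ring

theorem half_mul_one_add_sub_inv (hx0 : x ≠ 0) (hs : s ^ 2 = 1 - 4 / x ^ 2) :
    x / 2 * (1 + s) - (x / 2 * (1 + s))⁻¹ = x * s := by
  rw [inv_half_mul_one_add hx0 hs]
  ring

theorem norm_inv_half_mul_one_add_sq_lt_one (hx0 : x ≠ 0) (hs : s ^ 2 = 1 - 4 / x ^ 2)
    (hre : 0 < s.re) : ‖(x / 2 * (1 + s))⁻¹ ^ 2‖ < 1 := by
  have hlt := norm_one_sub_lt_norm_one_add hre
  have hx2 : ‖x / 2‖ ≠ 0 := norm_ne_zero_iff.2 (div_ne_zero hx0 two_ne_zero)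
  rw [sq, ← div_eq_inv_mul, norm_div, inv_half_mul_one_add hx0 hs, norm_mul, norm_mul,
    mul_div_mul_left _ _ hx2, div_lt_one ((norm_nonneg _).trans_lt hlt)]
  exact hlt

end RootOfQuadratic

/-- with `x ∉ [−2,2]`, `x² ≠ μ`, `λ = (x/2)(1 + √(1 − 4/x²))`,
`AB = (x² − μ)/(x² − 4)` and `yₙ = Aλⁿ + Bλ⁻ⁿ ≠ 0` for all `n ∈ ℤ`, the family
`(μ/(x·yₙ·y_{n+1}))_{n ∈ ℤ}` is summable with sum `(μ/(x² − μ))·√(1 − 4/x²)`. -/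
theorem hasSum_mu_div_x_y_y_succ (μ x : ℂ)
    (hx : x ∉ (fun r : ℝ => (r : ℂ)) '' Set.Icc (-2 : ℝ) 2) (hxμ : x ^ 2 ≠ μ)
    (lam : ℂ) (hlam : lam = (x / 2) * (1 + csqrt (1 - 4 / x ^ 2)))
    (A B : ℂ) (hAB : A * B = (x ^ 2 - μ) / (x ^ 2 - 4))
    (y : ℤ → ℂ) (hy : ∀ n : ℤ, y n = A * lam ^ n + B * lam⁻¹ ^ n)
    (hy0 : ∀ n : ℤ, y n ≠ 0) :
    HasSum (fun n : ℤ => μ / (x * y n * y (n + 1)))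
      ((μ / (x ^ 2 - μ)) * csqrt (1 - 4 / x ^ 2)) := by
  have hw := one_sub_four_div_sq_mem_slitPlane hx
  have hx0 := ne_zero_of_notMem_image_Icc hx
  set s := csqrt (1 - 4 / x ^ 2)
  have hs : s ^ 2 = 1 - 4 / x ^ 2 := csqrt_sq _
  have hre : 0 < s.re := re_csqrt_pos hw
  have hlam0 : lam ≠ 0 := hlam ▸ half_mul_one_add_ne_zero hx0 hre
  have hq : ‖lam⁻¹ ^ 2‖ < 1 := hlam ▸ norm_inv_half_mul_one_add_sq_lt_one hx0 hs hre
  have hdiff : lam - lam⁻¹ = x * s := hlam ▸ half_mul_one_add_sub_inv hx0 hs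
  have hABx : A * B * (x ^ 2 * s ^ 2) = x ^ 2 - μ := by
    rw [hAB, hs, show x ^ 2 * (1 - 4 / x ^ 2) = x ^ 2 - 4 by field_simp,
      div_mul_cancel₀ _ (sq_sub_four_ne_zero hx)]
  have hne : A * B * (x ^ 2 * s ^ 2) ≠ 0 := by
    rw [hABx]
    exact sub_ne_zero.2 hxμ
  obtain ⟨⟨hA, hB⟩, -, hs0⟩ : (A ≠ 0 ∧ B ≠ 0) ∧ x ≠ 0 ∧ s ≠ 0 := by simpa using hne
  have hsum := hasSum_int_inv_one_add_mul_zpow_sub hq (pow_ne_zero 2 (inv_ne_zero hlam0))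
    (div_ne_zero hB hA) fun n h => hy0 n <| by
      rw [hy, mul_zpow_add_mul_inv_zpow hA hlam0, h, mul_zero]
  have hterm (n : ℤ) : μ / (x * y n * y (n + 1)) = μ / (A * B * x ^ 2 * s) *
      ((1 + B / A * (lam⁻¹ ^ 2) ^ (n + 1))⁻¹ - (1 + B / A * (lam⁻¹ ^ 2) ^ n)⁻¹) := by
    rw [inv_one_add_div_mul_inv_sq_zpow_sub hA hlam0 hy hy0, hdiff]
    field_simp [hy0 n, hy0 (n + 1)]
  have hconst : μ / (x ^ 2 - μ) * s = μ / (A * B * x ^ 2 * s) * 1 := by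
    rw [mul_one, ← hABx]
    field_simp
  rw [funext hterm, hconst]
  exact hsum.mul_left _
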